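/- For ±1-valued random variables, if I₂ is a bipartite Bell expression with local bound β_L and nonsignaling bound β_NS, then for any tripartite distribution p that is a convex combination of distributions each of which has an LHV bipartite marginal over (A,B), over (A′,C), or over (B′,C′), the expression I₃ = I₂(A,B) + I₂(A′,C) + I₂(B′,C′) satisfies I₃ ≤ β_L + 2β_NS. -/
import Mathlib

/-- A bipartite conditional distribution (outputs in O, inputs in X) is nonsignaling. -/
def IsBipNS {O X : Type} [Fintype O] (q : O → O → X → X → ℝ) : Prop :=
  (∀ a b x y, 0 ≤ q a b x y) ∧ (∀ x y, ∑ a, ∑ b, q a b x y = 1) ∧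
  (∀ a x y y', ∑ b, q a b x y = ∑ b, q a b x y') ∧
  (∀ b y x x', ∑ a, q a b x y = ∑ a, q a b x' y)

/-- A bipartite conditional distribution admits a local-hidden-variable model. -/
def IsBipLHV {O X : Type} [Fintype O] (q : O → O → X → X → ℝ) : Prop :=
  ∃ (n : ℕ) (w : Fin n → ℝ) (r₁ r₂ : O → X → Fin n → ℝ),
    (∀ l, 0 ≤ w l) ∧ (∑ l, w l = 1) ∧
    (∀ a x l, 0 ≤ r₁ a x l) ∧ (∀ x l, ∑ a, r₁ a x l = 1) ∧
    (∀ b y l, 0 ≤ r₂ b y l) ∧ (∀ y l, ∑ b, r₂ b y l = 1) ∧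
    (∀ a b x y, q a b x y = ∑ l, w l * r₁ a x l * r₂ b y l)

/-- A tripartite conditional distribution, each party outputting a pair in O × O, is a
nonsignaling distribution. -/
def IsTriNS {O X : Type} [Fintype O]
    (p : O × O → O × O → O × O → X → X → X → ℝ) : Prop :=
  (∀ u v t x y z, 0 ≤ p u v t x y z) ∧
  (∀ x y z, ∑ u, ∑ v, ∑ t, p u v t x y z = 1) ∧
  (∀ v t y z x x', ∑ u, p u v t x y z = ∑ u, p u v t x' y z) ∧
  (∀ u t x z y y', ∑ v, p u v t x y z = ∑ v, p u v t x y' z) ∧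
  (∀ u v x y z z', ∑ t, p u v t x y z = ∑ t, p u v t x y z')

/-- Marginal over (A,B): the first output bit-variables of parties 1 and 2. -/
noncomputable def margAB {O X : Type} [Fintype O] [Inhabited X]
    (p : O × O → O × O → O × O → X → X → X → ℝ) (a b : O) (x y : X) : ℝ :=
  ∑ a', ∑ b', ∑ t : O × O, p (a, a') (b, b') t x y default

/-- Marginal over (A′,C): the second variable of party 1 and first variable of party 3. -/
noncomputable def margA'C {O X : Type} [Fintype O] [Inhabited X]
    (p : O × O → O × O → O × O → X → X → X → ℝ) (a' c : O) (x z : X) : ℝ :=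
  ∑ a, ∑ v : O × O, ∑ c', p (a, a') v (c, c') x default z

/-- Marginal over (B′,C′): the second variables of parties 2 and 3. -/
noncomputable def margB'C' {O X : Type} [Fintype O] [Inhabited X]
    (p : O × O → O × O → O × O → X → X → X → ℝ) (b' c' : O) (y z : X) : ℝ :=
  ∑ u : O × O, ∑ b, ∑ c, p u (b, b') (c, c') default y z

/-- A linear bipartite Bell functional given by a coefficient tensor M. -/
noncomputable def I₂ {O X : Type} [Fintype O] [Fintype X]
    (M : O → O → X → X → ℝ) (q : O → O → X → X → ℝ) : ℝ :=
  ∑ a, ∑ b, ∑ x, ∑ y, M a b x y * q a b x y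

/- ------------------- auxiliary lemmas ------------------- -/

lemma sum3_rot {α β γ : Type} [Fintype α] [Fintype β] [Fintype γ] (f : α → β → γ → ℝ) :
    ∑ a, ∑ b, ∑ c, f a b c = ∑ c, ∑ a, ∑ b, f a b c := by
  have h : ∀ a, ∑ b, ∑ c, f a b c = ∑ c, ∑ b, f a b c := fun a => Finset.sum_comm
  simp_rw [h]; exact Finset.sum_comm

lemma sum4_pull {α β γ δ : Type} [Fintype α] [Fintype β] [Fintype γ] [Fintype δ]
    (f : α → β → γ → δ → ℝ) :
    ∑ a, ∑ b, ∑ c, ∑ k, f a b c k = ∑ k, ∑ a, ∑ b, ∑ c, f a b c k := by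
  have i1 : ∀ a b, ∑ c, ∑ k, f a b c k = ∑ k, ∑ c, f a b c k := fun a b => Finset.sum_comm
  simp_rw [i1]
  have i2 : ∀ a, ∑ b, ∑ k, ∑ c, f a b c k = ∑ k, ∑ b, ∑ c, f a b c k :=
    fun a => Finset.sum_comm
  simp_rw [i2]
  exact Finset.sum_comm

lemma margAB_NS {O X : Type} [Fintype O] [Inhabited X]
    (p : O × O → O × O → O × O → X → X → X → ℝ) (h : IsTriNS p) :
    IsBipNS (margAB p) := by
  obtain ⟨h0, h1, hA, hB, hC⟩ := h
  refine ⟨fun a b x y => ?_, fun x y => ?_, fun a x y y' => ?_, fun b y x x' => ?_⟩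
  · exact Finset.sum_nonneg fun _ _ => Finset.sum_nonneg fun _ _ =>
      Finset.sum_nonneg fun _ _ => h0 _ _ _ _ _ _
  · have key : ∑ a, ∑ b, margAB p a b x y
        = ∑ u : O × O, ∑ v : O × O, ∑ t : O × O, p u v t x y default := by
      simp only [margAB, Fintype.sum_prod_type]
      exact Finset.sum_congr rfl fun a _ => Finset.sum_comm
    rw [key, h1]
  · have key : ∀ y, ∑ b, margAB p a b x y
        = ∑ a', ∑ t : O × O, ∑ v : O × O, p (a, a') v t x y default := by
      intro y
      simp only [margAB]
      rw [Finset.sum_comm]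
      refine Finset.sum_congr rfl fun a' _ => ?_
      rw [sum3_rot]
      exact Finset.sum_congr rfl fun t _ =>
        (Fintype.sum_prod_type (fun v : O × O => p (a, a') v t x y default)).symm
    rw [key y, key y']
    exact Finset.sum_congr rfl fun a' _ => Finset.sum_congr rfl fun t _ =>
      hB (a, a') t x default y y'
  · have key : ∀ x, ∑ a, margAB p a b x y
        = ∑ b', ∑ t : O × O, ∑ u : O × O, p u (b, b') t x y default := by
      intro x
      simp only [margAB]
      have h2 : ∀ a, ∑ a', ∑ b', ∑ t : O × O, p (a, a') (b, b') t x y default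
          = ∑ b', ∑ t : O × O, ∑ a', p (a, a') (b, b') t x y default := by
        intro a; rw [Finset.sum_comm]
        exact Finset.sum_congr rfl fun b' _ => Finset.sum_comm
      simp_rw [h2]
      rw [(sum3_rot fun b' (t : O × O) a =>
        ∑ a', p (a, a') (b, b') t x y default).symm]
      refine Finset.sum_congr rfl fun b' _ => Finset.sum_congr rfl fun t _ => ?_
      exact (Fintype.sum_prod_type (fun u : O × O => p u (b, b') t x y default)).symm
    rw [key x, key x']
    exact Finset.sum_congr rfl fun b' _ => Finset.sum_congr rfl fun t _ =>
      hA (b, b') t y default x x'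

lemma margA'C_NS {O X : Type} [Fintype O] [Inhabited X]
    (p : O × O → O × O → O × O → X → X → X → ℝ) (h : IsTriNS p) :
    IsBipNS (margA'C p) := by
  obtain ⟨h0, h1, hA, hB, hC⟩ := h
  have s1 : ∀ (a' : O) (x z : X), ∑ c, margA'C p a' c x z
      = ∑ a, ∑ v : O × O, ∑ t : O × O, p (a, a') v t x default z := by
    intro a' x z
    simp only [margA'C]
    rw [(sum3_rot fun a (v : O × O) c =>
      ∑ c', p (a, a') v (c, c') x default z).symm]
    refine Finset.sum_congr rfl fun a _ => Finset.sum_congr rfl fun v _ => ?_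
    exact (Fintype.sum_prod_type (fun t : O × O => p (a, a') v t x default z)).symm
  refine ⟨fun a' c x z => ?_, fun x z => ?_, fun a' x z z' => ?_, fun c z x x' => ?_⟩
  · exact Finset.sum_nonneg fun _ _ => Finset.sum_nonneg fun _ _ =>
      Finset.sum_nonneg fun _ _ => h0 _ _ _ _ _ _
  · have key : ∑ a', ∑ c, margA'C p a' c x z
        = ∑ u : O × O, ∑ v : O × O, ∑ t : O × O, p u v t x default z := by
      simp_rw [s1]
      rw [Finset.sum_comm]
      exact (Fintype.sum_prod_type
        (fun u : O × O => ∑ v : O × O, ∑ t : O × O, p u v t x default z)).symm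
    rw [key, h1]
  · rw [s1 a' x z, s1 a' x z']
    exact Finset.sum_congr rfl fun a _ => Finset.sum_congr rfl fun v _ =>
      hC (a, a') v x default z z'
  · have key : ∀ x, ∑ a', margA'C p a' c x z
        = ∑ v : O × O, ∑ c', ∑ u : O × O, p u v (c, c') x default z := by
      intro x
      simp only [margA'C]
      rw [sum3_rot fun a' a (v : O × O) => ∑ c', p (a, a') v (c, c') x default z]
      refine Finset.sum_congr rfl fun v _ => ?_
      rw [sum3_rot fun a' a c' => p (a, a') v (c, c') x default z]
      refine Finset.sum_congr rfl fun c' _ => ?_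
      rw [Finset.sum_comm]
      exact (Fintype.sum_prod_type (fun u : O × O => p u v (c, c') x default z)).symm
    rw [key x, key x']
    exact Finset.sum_congr rfl fun v _ => Finset.sum_congr rfl fun c' _ =>
      hA v (c, c') default z x x'

lemma margB'C'_NS {O X : Type} [Fintype O] [Inhabited X]
    (p : O × O → O × O → O × O → X → X → X → ℝ) (h : IsTriNS p) :
    IsBipNS (margB'C' p) := by
  obtain ⟨h0, h1, hA, hB, hC⟩ := h
  refine ⟨fun b' c' y z => ?_, fun y z => ?_, fun b' y z z' => ?_, fun c' z y y' => ?_⟩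
  · exact Finset.sum_nonneg fun _ _ => Finset.sum_nonneg fun _ _ =>
      Finset.sum_nonneg fun _ _ => h0 _ _ _ _ _ _
  · have key : ∑ b', ∑ c', margB'C' p b' c' y z
        = ∑ u : O × O, ∑ v : O × O, ∑ t : O × O, p u v t default y z := by
      simp only [margB'C']
      rw [sum3_rot fun b' c' (u : O × O) =>
        ∑ b, ∑ c, p u (b, b') (c, c') default y z]
      refine Finset.sum_congr rfl fun u _ => ?_
      have i : ∀ b', ∑ c', ∑ b, ∑ c, p u (b, b') (c, c') default y z
          = ∑ b, ∑ c, ∑ c', p u (b, b') (c, c') default y z := by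
        intro b'
        exact (sum3_rot fun b c c' => p u (b, b') (c, c') default y z).symm
      simp_rw [i]
      rw [Finset.sum_comm]
      rw [Fintype.sum_prod_type
        (fun v : O × O => ∑ t : O × O, p u v t default y z)]
      refine Finset.sum_congr rfl fun b _ => Finset.sum_congr rfl fun b' _ => ?_
      exact (Fintype.sum_prod_type (fun t : O × O => p u (b, b') t default y z)).symm
    rw [key, h1]
  · have key : ∀ z, ∑ c', margB'C' p b' c' y z
        = ∑ u : O × O, ∑ b, ∑ t : O × O, p u (b, b') t default y z := by
      intro z
      simp only [margB'C']
      rw [(sum3_rot fun (u : O × O) b c' =>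
        ∑ c, p u (b, b') (c, c') default y z).symm]
      refine Finset.sum_congr rfl fun u _ => Finset.sum_congr rfl fun b _ => ?_
      rw [Finset.sum_comm]
      exact (Fintype.sum_prod_type (fun t : O × O => p u (b, b') t default y z)).symm
    rw [key z, key z']
    exact Finset.sum_congr rfl fun u _ => Finset.sum_congr rfl fun b _ =>
      hC u (b, b') default y z z'
  · have key : ∀ y, ∑ b', margB'C' p b' c' y z
        = ∑ u : O × O, ∑ c, ∑ v : O × O, p u v (c, c') default y z := by
      intro y
      simp only [margB'C']
      rw [(sum3_rot fun (u : O × O) b b' =>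
        ∑ c, p u (b, b') (c, c') default y z).symm]
      refine Finset.sum_congr rfl fun u _ => ?_
      rw [sum3_rot fun b b' c => p u (b, b') (c, c') default y z]
      refine Finset.sum_congr rfl fun c _ => ?_
      exact (Fintype.sum_prod_type (fun v : O × O => p u v (c, c') default y z)).symm
    rw [key y, key y']
    exact Finset.sum_congr rfl fun u _ => Finset.sum_congr rfl fun c _ =>
      hB u (c, c') default z y y'

lemma I₂_mix {O X K : Type} [Fintype O] [Fintype X] [Fintype K]
    (M : O → O → X → X → ℝ) (c : K → ℝ) (q : K → (O → O → X → X → ℝ)) :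
    I₂ M (fun a b x y => ∑ k, c k * q k a b x y) = ∑ k, c k * I₂ M (q k) := by
  simp only [I₂]
  simp_rw [Finset.mul_sum]
  have e : ∀ a, ∑ b, ∑ x, ∑ y, ∑ k, M a b x y * (c k * q k a b x y)
      = ∑ k, ∑ b, ∑ x, ∑ y, M a b x y * (c k * q k a b x y) :=
    fun a => sum4_pull _
  simp_rw [e]
  rw [Finset.sum_comm]
  refine Finset.sum_congr rfl fun k _ => Finset.sum_congr rfl fun a _ =>
    Finset.sum_congr rfl fun b _ => Finset.sum_congr rfl fun x _ =>
    Finset.sum_congr rfl fun y _ => by ring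

/-- inequality (11) of the paper: if I₂ has local bound β_L and
nonsignaling bound β_NS, then for any convex combination of nonsignaling tripartite
distributions each having an LHV bipartite marginal over (A,B), (A′,C), or (B′,C′),
one has I₂(A,B) + I₂(A′,C) + I₂(B′,C′) ≤ β_L + 2β_NS. -/
theorem I3_bound_for_pairwise_LHV_mixtures
    {O X K : Type} [Fintype O] [Fintype X] [Inhabited X] [Fintype K]
    (M : O → O → X → X → ℝ) (βL βNS : ℝ)
    (hL : ∀ q : O → O → X → X → ℝ, IsBipLHV q → I₂ M q ≤ βL)
    (hNS : ∀ q : O → O → X → X → ℝ, IsBipNS q → I₂ M q ≤ βNS)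
    (p : O × O → O × O → O × O → X → X → X → ℝ)
    (w : K → ℝ) (pk : K → (O × O → O × O → O × O → X → X → X → ℝ))
    (hw0 : ∀ k, 0 ≤ w k) (hwn : ∑ k, w k = 1)
    (hkNS : ∀ k, IsTriNS (pk k))
    (hkLHV : ∀ k, IsBipLHV (margAB (pk k)) ∨ IsBipLHV (margA'C (pk k)) ∨
      IsBipLHV (margB'C' (pk k)))
    (hmix : ∀ u v t x y z, p u v t x y z = ∑ k, w k * pk k u v t x y z) :
    I₂ M (margAB p) + I₂ M (margA'C p) + I₂ M (margB'C' p) ≤ βL + 2 * βNS := by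
  -- marginals are linear in p
  have hAB : margAB p = fun a b x y => ∑ k, w k * margAB (pk k) a b x y := by
    funext a b x y
    simp only [margAB]
    simp_rw [hmix]
    rw [sum4_pull fun a' b' (t : O × O) k => w k * pk k (a, a') (b, b') t x y default]
    refine Finset.sum_congr rfl fun k _ => ?_
    simp_rw [Finset.mul_sum]
  have hA'C : margA'C p = fun a' c x z => ∑ k, w k * margA'C (pk k) a' c x z := by
    funext a' c x z
    simp only [margA'C]
    simp_rw [hmix]
    rw [sum4_pull fun a (v : O × O) c' k => w k * pk k (a, a') v (c, c') x default z]
    refine Finset.sum_congr rfl fun k _ => ?_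
    simp_rw [Finset.mul_sum]
  have hB'C' : margB'C' p = fun b' c' y z => ∑ k, w k * margB'C' (pk k) b' c' y z := by
    funext b' c' y z
    simp only [margB'C']
    simp_rw [hmix]
    rw [sum4_pull fun (u : O × O) b c k => w k * pk k u (b, b') (c, c') default y z]
    refine Finset.sum_congr rfl fun k _ => ?_
    simp_rw [Finset.mul_sum]
  rw [hAB, hA'C, hB'C', I₂_mix, I₂_mix, I₂_mix]
  rw [← Finset.sum_add_distrib, ← Finset.sum_add_distrib]
  calc ∑ k, (w k * I₂ M (margAB (pk k)) + w k * I₂ M (margA'C (pk k))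
        + w k * I₂ M (margB'C' (pk k)))
      ≤ ∑ k, w k * (βL + 2 * βNS) := by
        refine Finset.sum_le_sum fun k _ => ?_
        rw [← mul_add, ← mul_add]
        refine mul_le_mul_of_nonneg_left ?_ (hw0 k)
        have nAB := hNS _ (margAB_NS _ (hkNS k))
        have nA'C := hNS _ (margA'C_NS _ (hkNS k))
        have nB'C' := hNS _ (margB'C'_NS _ (hkNS k))
        rcases hkLHV k with hl | hl | hl
        · have := hL _ hl; linarith
        · have := hL _ hl; linarith
        · have := hL _ hl; linarith
    _ = βL + 2 * βNS := by rw [← Finset.sum_mul, hwn, one_mul]
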